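/- Let A be an N×N Hermitian positive semidefinite complex matrix. Then for every natural number k, the operator 2-norm of φ_k(A) satisfies ‖φ_k(A)‖_2 ≤ 1/k!. -/

import Mathlib

open scoped ComplexOrder
open scoped Matrix

attribute [local instance] Matrix.instL2OpNormedRing Matrix.instL2OpNormedAlgebra

noncomputable local instance {N : ℕ} : CompleteSpace (Matrix (Fin N) (Fin N) ℂ) :=
  FiniteDimensional.complete ℂ _


noncomputable def gg (k : ℕ) (t : ℝ) : ℝ :=
  ∑' j : ℕ, (-1 : ℝ) ^ j * t ^ (2 * j + k) / (Nat.factorial (2 * j + k) : ℝ)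

lemma summable_gg (k : ℕ) (t : ℝ) :
    Summable (fun j : ℕ => (-1 : ℝ) ^ j * t ^ (2 * j + k) / (Nat.factorial (2 * j + k) : ℝ)) := by
  apply Summable.of_norm_bounded
    (g := fun j : ℕ => |t| ^ (2 * j + k) / (Nat.factorial (2 * j + k) : ℝ))
  · exact (Real.summable_pow_div_factorial |t|).comp_injective (fun a b h => by omega)
  · intro j
    simp [abs_div, abs_mul, abs_pow, Nat.abs_cast]

lemma gg_zero (t : ℝ) : gg 0 t = Real.cos t := by
  rw [Real.cos_eq_tsum, gg]
  simp

lemma gg_succ_zero (k : ℕ) : gg (k + 1) 0 = 0 := by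
  rw [gg]
  convert tsum_zero with j
  rw [zero_pow (by omega), mul_zero, zero_div]

lemma hasDerivAt_gg (k : ℕ) (t : ℝ) : HasDerivAt (gg (k + 1)) (gg k t) t := by
  have h := hasDerivAt_tsum_of_isPreconnected
    (u := fun j : ℕ => (|t| + 1) ^ (2 * j + k) / (Nat.factorial (2 * j + k) : ℝ))
    (g := fun j y => (-1 : ℝ) ^ j * y ^ (2 * j + (k + 1)) / (Nat.factorial (2 * j + (k + 1)) : ℝ))
    (g' := fun j y => (-1 : ℝ) ^ j * y ^ (2 * j + k) / (Nat.factorial (2 * j + k) : ℝ))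
    (t := Metric.ball (0 : ℝ) (|t| + 1)) (y₀ := t) (y := t)
    ?_ Metric.isOpen_ball (convex_ball _ _).isPreconnected ?_ ?_ ?_ (summable_gg (k+1) t) ?_
  · exact h
  · exact (Real.summable_pow_div_factorial _).comp_injective (fun a b h => by omega)
  · intro j y _
    have h1 : 2 * j + (k + 1) = 2 * j + k + 1 := by omega
    simp only [h1]
    have h2 : HasDerivAt (fun z : ℝ => (-1 : ℝ) ^ j / (Nat.factorial (2 * j + k + 1) : ℝ)
        * z ^ (2 * j + k + 1))
        ((-1 : ℝ) ^ j / (Nat.factorial (2 * j + k + 1) : ℝ)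
          * ((2 * j + k + 1) * y ^ (2 * j + k))) y := by
      simpa using (hasDerivAt_pow (2 * j + k + 1) y).const_mul
        ((-1 : ℝ) ^ j / (Nat.factorial (2 * j + k + 1) : ℝ))
    refine (h2.congr_deriv ?_).congr_of_eventuallyEq (Filter.Eventually.of_forall fun z => ?_)
    · have hne : (Nat.factorial (2 * j + k) : ℝ) ≠ 0 := Nat.cast_ne_zero.2 (Nat.factorial_ne_zero _)
      rw [Nat.factorial_succ]
      push_cast
      field_simp
    · beta_reduce; ring
  · intro j y hy
    rw [Metric.mem_ball, Real.dist_eq, sub_zero] at hy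
    have hy' : |y| ≤ |t| + 1 := le_of_lt hy
    have he : ‖(-1 : ℝ) ^ j * y ^ (2 * j + k) / (Nat.factorial (2 * j + k) : ℝ)‖
        = |y| ^ (2 * j + k) / (Nat.factorial (2 * j + k) : ℝ) := by
      simp [abs_div, abs_mul, abs_pow, Nat.abs_cast]
    rw [he]
    have hp := pow_le_pow_left₀ (abs_nonneg y) hy' (2 * j + k)
    exact div_le_div_of_nonneg_right hp (by positivity) |>.trans_eq rfl
  · simp [Real.dist_eq, abs_nonneg]
  · simp [Real.dist_eq, abs_nonneg]

lemma abs_gg_le (k : ℕ) : ∀ t : ℝ, 0 ≤ t → |gg k t| ≤ t ^ k / (Nat.factorial k : ℝ) := by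
  induction k with
  | zero =>
    intro t _
    simp only [gg_zero, pow_zero, Nat.factorial_zero, Nat.cast_one, div_one]
    exact Real.abs_cos_le_one t
  | succ k ih =>
    intro t ht
    have hderiv : ∀ s : ℝ, HasDerivAt (gg (k + 1)) (gg k s) s := hasDerivAt_gg k
    have key : ∀ (c : ℝ), c = 1 ∨ c = -1 →
        c * gg (k + 1) t ≤ t ^ (k + 1) / (Nat.factorial (k + 1) : ℝ) := by
      intro c hc
      set F : ℝ → ℝ := fun s => s ^ (k + 1) / (Nat.factorial (k + 1) : ℝ) - c * gg (k + 1) s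
        with hF
      have hFd : ∀ s : ℝ, HasDerivAt F (s ^ k / (Nat.factorial k : ℝ) - c * gg k s) s := by
        intro s
        have h1 : HasDerivAt (fun s : ℝ => s ^ (k + 1) / (Nat.factorial (k + 1) : ℝ))
            (s ^ k / (Nat.factorial k : ℝ)) s := by
          have := (hasDerivAt_pow (k + 1) s).div_const (Nat.factorial (k + 1) : ℝ)
          refine this.congr_deriv ?_
          rw [Nat.factorial_succ, Nat.add_sub_cancel]
          have hne : (Nat.factorial k : ℝ) ≠ 0 := Nat.cast_ne_zero.2 (Nat.factorial_ne_zero _)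
          push_cast
          field_simp
        exact h1.sub ((hderiv s).const_mul c)
      have hmono : MonotoneOn F (Set.Icc 0 t) := by
        apply monotoneOn_of_deriv_nonneg (convex_Icc 0 t)
        · exact (fun s _ => ((hFd s).continuousAt.continuousWithinAt))
        · intro s _
          exact (hFd s).differentiableAt.differentiableWithinAt
        · intro s hs
          rw [interior_Icc] at hs
          rw [(hFd s).deriv]
          have hgs : |gg k s| ≤ s ^ k / (Nat.factorial k : ℝ) := ih s hs.1.le
          have : c * gg k s ≤ s ^ k / (Nat.factorial k : ℝ) := by
            rcases hc with rfl | rfl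
            · rw [one_mul]; exact (le_abs_self _).trans hgs
            · rw [neg_one_mul]; exact (neg_le_abs _).trans hgs
          linarith
      have h0 : F 0 ≤ F t := hmono (Set.mem_Icc.2 ⟨le_refl 0, ht⟩)
        (Set.mem_Icc.2 ⟨ht, le_refl t⟩) ht
      have hF0 : F 0 = 0 := by
        simp [hF, gg_succ_zero, zero_pow (Nat.succ_ne_zero k)]
      rw [hF0] at h0
      simp only [hF] at h0
      linarith
    have h1 := key 1 (Or.inl rfl)
    have h2 := key (-1) (Or.inr rfl)
    rw [abs_le]
    constructor <;> [linarith [h2]; linarith [h1]]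

lemma abs_phi_le (k : ℕ) (x : ℝ) (hx : 0 ≤ x) :
    |∑' j : ℕ, (-1 : ℝ) ^ j * x ^ j / (Nat.factorial (2 * j + k) : ℝ)|
      ≤ 1 / (Nat.factorial k : ℝ) := by
  rcases eq_or_lt_of_le hx with h | h
  · rw [← h]
    have : (fun j : ℕ => (-1 : ℝ) ^ j * (0:ℝ) ^ j / (Nat.factorial (2 * j + k) : ℝ))
        = fun j : ℕ => if j = 0 then 1 / (Nat.factorial k : ℝ) else 0 := by
      funext j
      rcases Nat.eq_zero_or_pos j with rfl | hj
      · simp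
      · simp [zero_pow (Nat.pos_iff_ne_zero.mp hj), Nat.pos_iff_ne_zero.mp hj]
    rw [this, tsum_ite_eq]
    rw [abs_of_nonneg (by positivity)]
  · set t := Real.sqrt x with htdef
    have ht : 0 < t := Real.sqrt_pos.2 h
    have ht2 : t ^ 2 = x := Real.sq_sqrt hx
    have hterm : ∀ j : ℕ, (-1 : ℝ) ^ j * t ^ (2 * j + k) / (Nat.factorial (2 * j + k) : ℝ)
        = ((-1 : ℝ) ^ j * x ^ j / (Nat.factorial (2 * j + k) : ℝ)) * t ^ k := by
      intro j
      rw [pow_add, pow_mul, ht2]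
      ring
    have hgg : gg k t = (∑' j : ℕ, (-1 : ℝ) ^ j * x ^ j / (Nat.factorial (2 * j + k) : ℝ)) * t ^ k := by
      rw [gg]
      simp_rw [hterm]
      exact tsum_mul_right
    have hb := abs_gg_le k t ht.le
    rw [hgg, abs_mul, abs_of_pos (pow_pos ht k)] at hb
    have htk : (0:ℝ) < t ^ k := pow_pos ht k
    calc |∑' j : ℕ, (-1 : ℝ) ^ j * x ^ j / (Nat.factorial (2 * j + k) : ℝ)|
        = |∑' j : ℕ, (-1 : ℝ) ^ j * x ^ j / (Nat.factorial (2 * j + k) : ℝ)| * t ^ k / t ^ k := by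
          field_simp
      _ ≤ (t ^ k / (Nat.factorial k : ℝ)) / t ^ k := by gcongr
      _ = 1 / (Nat.factorial k : ℝ) := by field_simp

lemma osc_norm_one_le {N : ℕ} : ‖(1 : Matrix (Fin N) (Fin N) ℂ)‖ ≤ 1 := by
  rw [Matrix.cstar_norm_def, map_one, ContinuousLinearMap.one_def]
  exact ContinuousLinearMap.norm_id_le

lemma osc_norm_unitary_le {N : ℕ} (U : Matrix.unitaryGroup (Fin N) ℂ) :
    ‖(U : Matrix (Fin N) (Fin N) ℂ)‖ ≤ 1 := by
  have h1 : (U : Matrix (Fin N) (Fin N) ℂ)ᴴ * U = 1 := by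
    rw [← Matrix.star_eq_conjTranspose]
    exact Unitary.coe_star_mul_self U
  have h2 := Matrix.l2_opNorm_conjTranspose_mul_self (U : Matrix (Fin N) (Fin N) ℂ)
  rw [h1] at h2
  have h3 : ‖(U : Matrix (Fin N) (Fin N) ℂ)‖ * ‖(U : Matrix (Fin N) (Fin N) ℂ)‖ ≤ 1 :=
    h2.symm.le.trans osc_norm_one_le
  nlinarith [norm_nonneg (U : Matrix (Fin N) (Fin N) ℂ)]

lemma osc_norm_diagonal_le {N : ℕ} (v : Fin N → ℂ) {c : ℝ} (hc : 0 ≤ c)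
    (hv : ∀ i, ‖v i‖ ≤ c) : ‖Matrix.diagonal v‖ ≤ c := by
  rw [Matrix.l2_opNorm_def]
  apply ContinuousLinearMap.opNorm_le_bound _ hc
  intro x
  have hBx : (Matrix.toEuclideanLin.trans LinearMap.toContinuousLinearMap
      (Matrix.diagonal v)) x
      = (EuclideanSpace.equiv (Fin N) ℂ).symm (Matrix.diagonal v *ᵥ x) := rfl
  rw [hBx]
  rw [EuclideanSpace.norm_eq, EuclideanSpace.norm_eq]
  have key : ∀ i, ‖((EuclideanSpace.equiv (Fin N) ℂ).symm (Matrix.diagonal v *ᵥ x)) i‖ ^ 2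
      ≤ c ^ 2 * ‖x i‖ ^ 2 := by
    intro i
    have : ((EuclideanSpace.equiv (Fin N) ℂ).symm (Matrix.diagonal v *ᵥ x)) i
        = v i * x i := by
      simp [Matrix.mulVec_diagonal]
    rw [this, norm_mul, mul_pow]
    have h2 : ‖v i‖ ^ 2 ≤ c ^ 2 := pow_le_pow_left₀ (norm_nonneg _) (hv i) 2
    exact mul_le_mul_of_nonneg_right h2 (sq_nonneg _)
  calc Real.sqrt (∑ i, ‖((EuclideanSpace.equiv (Fin N) ℂ).symm (Matrix.diagonal v *ᵥ x)) i‖ ^ 2)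
      ≤ Real.sqrt (∑ i, c ^ 2 * ‖x i‖ ^ 2) := by
        apply Real.sqrt_le_sqrt
        exact Finset.sum_le_sum fun i _ => key i
    _ = c * Real.sqrt (∑ i, ‖x i‖ ^ 2) := by
        rw [← Finset.mul_sum, Real.sqrt_mul (sq_nonneg c), Real.sqrt_sq hc]

/-- The oscillatory matrix function `φ_k(A) = ∑_{j=0}^∞ (-1)^j A^j / (2j+k)!`,
where matrices carry the operator norm induced by the Euclidean norm on `ℂ^N`. -/
noncomputable def oscM {N : ℕ} (k : ℕ) (A : Matrix (Fin N) (Fin N) ℂ) :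
    Matrix (Fin N) (Fin N) ℂ :=
  ∑' j : ℕ, ((-1 : ℂ) ^ j / (Nat.factorial (2 * j + k) : ℂ)) • A ^ j

/-- if `A` is Hermitian positive semidefinite, then the operator
2-norm of `φ_k(A)` is at most `1/k!`. -/
theorem oscM_norm_le_of_posSemidef {N : ℕ} (A : Matrix (Fin N) (Fin N) ℂ)
    (hA : A.PosSemidef) (k : ℕ) :
    ‖oscM k A‖ ≤ 1 / (Nat.factorial k : ℝ) := by
  classical
  have hH : A.IsHermitian := hA.1
  set U : Matrix (Fin N) (Fin N) ℂ := (hH.eigenvectorUnitary : Matrix (Fin N) (Fin N) ℂ)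
    with hUdef
  set d : Fin N → ℂ := RCLike.ofReal ∘ hH.eigenvalues with hddef
  set D : Matrix (Fin N) (Fin N) ℂ := Matrix.diagonal d with hDdef
  have hspec : A = U * D * star U := hH.spectral_theorem
  have hUU : star U * U = 1 := Unitary.coe_star_mul_self hH.eigenvectorUnitary
  have hUUs : U * star U = 1 := Unitary.coe_mul_star_self hH.eigenvectorUnitary
  have hpow : ∀ j : ℕ, A ^ j = U * D ^ j * star U := by
    intro j
    induction j with
    | zero => rw [pow_zero, pow_zero, mul_one, hUUs]
    | succ j ih =>
      calc A ^ (j + 1) = A ^ j * A := by rw [pow_succ]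
        _ = (U * D ^ j * star U) * (U * D * star U) := by rw [ih, ← hspec]
        _ = U * D ^ j * ((star U * U) * (D * star U)) := by simp only [mul_assoc]
        _ = U * D ^ j * (D * star U) := by rw [hUU, one_mul]
        _ = U * (D ^ j * D) * star U := by simp only [mul_assoc]
        _ = U * D ^ (j + 1) * star U := by rw [pow_succ]
  set c : ℕ → ℂ := fun j => (-1 : ℂ) ^ j / (Nat.factorial (2 * j + k) : ℂ) with hcdef
  have hcnorm : ∀ j, ‖c j‖ = 1 / (Nat.factorial (2 * j + k) : ℝ) := by
    intro j
    simp [hcdef, norm_div, norm_pow]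
  -- summability of the diagonal series
  have hDpow : ∀ j, ‖D ^ j‖ ≤ ‖D‖ ^ j := by
    intro j
    rcases Nat.eq_zero_or_pos j with rfl | hj
    · simpa using osc_norm_one_le
    · exact norm_pow_le' D hj
  have hbound : ∀ j : ℕ, ‖c j • D ^ j‖ ≤ ‖D‖ ^ j / (Nat.factorial j : ℝ) := by
    intro j
    rw [norm_smul, hcnorm]
    calc 1 / (Nat.factorial (2 * j + k) : ℝ) * ‖D ^ j‖
        ≤ 1 / (Nat.factorial j : ℝ) * ‖D‖ ^ j := by
          apply mul_le_mul _ (hDpow j) (norm_nonneg _) (by positivity)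
          apply one_div_le_one_div_of_le (by positivity)
          exact_mod_cast Nat.factorial_le (by omega)
      _ = ‖D‖ ^ j / (Nat.factorial j : ℝ) := by ring
  have hsumD : Summable (fun j : ℕ => c j • D ^ j) :=
    Summable.of_norm_bounded (Real.summable_pow_div_factorial ‖D‖) hbound
  have hsumA : Summable (fun j : ℕ => c j • A ^ j) := by
    apply Summable.of_norm_bounded (g := fun j => 1 * (‖D‖ ^ j / (Nat.factorial j : ℝ)) * 1)
    · simpa using (Real.summable_pow_div_factorial ‖D‖).mul_left 1
    · intro j
      rw [hpow j]
      have h1 : c j • (U * D ^ j * star U) = U * (c j • D ^ j) * star U := by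
        rw [mul_smul_comm, smul_mul_assoc]
      rw [h1]
      calc ‖U * (c j • D ^ j) * star U‖ ≤ ‖U * (c j • D ^ j)‖ * ‖star U‖ :=
            Matrix.l2_opNorm_mul _ _
        _ ≤ ‖U‖ * ‖c j • D ^ j‖ * ‖star U‖ := by
            apply mul_le_mul_of_nonneg_right (Matrix.l2_opNorm_mul _ _) (norm_nonneg _)
        _ ≤ 1 * (‖D‖ ^ j / (Nat.factorial j : ℝ)) * 1 := by
            have hsU : ‖star U‖ ≤ 1 := by
              rw [Matrix.star_eq_conjTranspose, Matrix.l2_opNorm_conjTranspose]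
              exact osc_norm_unitary_le _
            have hU1 : ‖U‖ ≤ 1 := osc_norm_unitary_le _
            have hbj := hbound j
            have h0 : (0:ℝ) ≤ ‖D‖ ^ j / (Nat.factorial j : ℝ) := by positivity
            exact mul_le_mul (mul_le_mul hU1 hbj (norm_nonneg _) zero_le_one) hsU
              (norm_nonneg _) (by linarith)
  -- the conjugation continuous linear map
  let conjL : Matrix (Fin N) (Fin N) ℂ →L[ℂ] Matrix (Fin N) (Fin N) ℂ :=
    LinearMap.toContinuousLinearMap
      { toFun := fun M => U * M * star U
        map_add' := fun M₁ M₂ => by simp [mul_add, add_mul]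
        map_smul' := fun r M => by simp [mul_smul_comm, smul_mul_assoc] }
  have hconjL : ∀ M, conjL M = U * M * star U := fun _ => rfl
  have hosc : oscM k A = conjL (∑' j : ℕ, c j • D ^ j) := by
    rw [oscM, conjL.map_tsum hsumD]
    apply tsum_congr
    intro j
    rw [hconjL, mul_smul_comm, smul_mul_assoc]
    rw [← hpow j]
  -- the diagonal continuous linear map
  let diagL : (Fin N → ℂ) →L[ℂ] Matrix (Fin N) (Fin N) ℂ :=
    LinearMap.toContinuousLinearMap
      { toFun := Matrix.diagonal
        map_add' := fun v₁ v₂ => (Matrix.diagonal_add v₁ v₂).symm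
        map_smul' := fun r v => by
          simp [Matrix.diagonal_smul r v] }
  have hdiagL : ∀ v, diagL v = Matrix.diagonal v := fun _ => rfl
  have hvsum : ∀ i : Fin N, Summable (fun j : ℕ => c j * d i ^ j) := by
    intro i
    apply Summable.of_norm_bounded (g := fun j => ‖d i‖ ^ j / (Nat.factorial j : ℝ))
      (Real.summable_pow_div_factorial _)
    intro j
    rw [norm_mul, hcnorm, norm_pow]
    calc 1 / (Nat.factorial (2 * j + k) : ℝ) * ‖d i‖ ^ j
        ≤ 1 / (Nat.factorial j : ℝ) * ‖d i‖ ^ j := by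
          apply mul_le_mul_of_nonneg_right _ (by positivity)
          apply one_div_le_one_div_of_le (by positivity)
          exact_mod_cast Nat.factorial_le (by omega)
      _ = ‖d i‖ ^ j / (Nat.factorial j : ℝ) := by ring
  have hvsum' : Summable (fun j : ℕ => (fun i => c j * d i ^ j : Fin N → ℂ)) :=
    Pi.summable.2 hvsum
  set w : Fin N → ℂ := fun i => ∑' j : ℕ, c j * d i ^ j with hwdef
  have hdiag : (∑' j : ℕ, c j • D ^ j) = Matrix.diagonal w := by
    have h1 : ∀ j : ℕ, c j • D ^ j = diagL (fun i => c j * d i ^ j) := by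
      intro j
      rw [hdiagL, hDdef, Matrix.diagonal_pow, ← Matrix.diagonal_smul]
      rfl
    calc (∑' j : ℕ, c j • D ^ j)
        = ∑' j : ℕ, diagL (fun i => c j * d i ^ j) := tsum_congr h1
      _ = diagL (∑' j : ℕ, (fun i => c j * d i ^ j : Fin N → ℂ)) :=
          (diagL.map_tsum hvsum').symm
      _ = Matrix.diagonal w := by
          rw [hdiagL]
          exact congrArg Matrix.diagonal (funext fun i => tsum_apply hvsum')
  -- final bound
  have hw : ∀ i, ‖w i‖ ≤ 1 / (Nat.factorial k : ℝ) := by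
    intro i
    have hmu : 0 ≤ hH.eigenvalues i := hA.eigenvalues_nonneg i
    have hterm : ∀ j : ℕ, c j * d i ^ j
        = (((-1 : ℝ) ^ j * (hH.eigenvalues i) ^ j / (Nat.factorial (2 * j + k) : ℝ) : ℝ) : ℂ) := by
      intro j
      have hdi : d i = ((hH.eigenvalues i : ℝ) : ℂ) := rfl
      rw [hcdef, hdi]
      push_cast
      ring
    rw [hwdef]
    simp only []
    rw [show (∑' j : ℕ, c j * d i ^ j)
        = ((∑' j : ℕ, (-1 : ℝ) ^ j * (hH.eigenvalues i) ^ j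
            / (Nat.factorial (2 * j + k) : ℝ) : ℝ) : ℂ) by
      rw [Complex.ofReal_tsum]
      exact tsum_congr hterm]
    rw [Complex.norm_real]
    exact abs_phi_le k _ hmu
  rw [hosc, hconjL, hdiag]
  calc ‖U * Matrix.diagonal w * star U‖
      ≤ ‖U‖ * ‖Matrix.diagonal w‖ * ‖star U‖ := by
        refine (Matrix.l2_opNorm_mul _ _).trans ?_
        exact mul_le_mul_of_nonneg_right (Matrix.l2_opNorm_mul _ _) (norm_nonneg _)
    _ ≤ 1 * (1 / (Nat.factorial k : ℝ)) * 1 := by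
        have hsU : ‖star U‖ ≤ 1 := by
          rw [Matrix.star_eq_conjTranspose, Matrix.l2_opNorm_conjTranspose]
          exact osc_norm_unitary_le _
        have hU1 : ‖U‖ ≤ 1 := osc_norm_unitary_le _
        have hdw : ‖Matrix.diagonal w‖ ≤ 1 / (Nat.factorial k : ℝ) :=
          osc_norm_diagonal_le w (by positivity) hw
        have h0 : (0:ℝ) ≤ 1 / (Nat.factorial k : ℝ) := by positivity
        exact mul_le_mul (mul_le_mul hU1 hdw (norm_nonneg _) zero_le_one) hsU
          (norm_nonneg _) (by linarith)
    _ = 1 / (Nat.factorial k : ℝ) := by ring
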